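/- arXiv:0807.4829 — 6 statements merged into one kernel-verified Lean document; each statement's English description precedes it below -/
import Mathlib

section
/- Let S be a finite semigroup and let a, b ∈ S. If a, b, and ab all belong to the same D-class of S, then ab lies in the intersection of the R-class of a and the L-class of b. -/
/-- Green's R relation: `a R b` iff `a S¹ = b S¹`. -/
def GreenR {S : Type*} [Semigroup S] (a b : S) : Prop :=
  (a = b ∨ ∃ u, a * u = b) ∧ (b = a ∨ ∃ u, b * u = a)

/-- Green's L relation: `a L b` iff `S¹ a = S¹ b`. -/
def GreenL {S : Type*} [Semigroup S] (a b : S) : Prop :=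
  (a = b ∨ ∃ u, u * a = b) ∧ (b = a ∨ ∃ u, u * b = a)

/-- Green's H relation. -/
def GreenH {S : Type*} [Semigroup S] (a b : S) : Prop := GreenR a b ∧ GreenL a b

/-- Green's D relation: `D = L ∘ R`. -/
def GreenD {S : Type*} [Semigroup S] (a b : S) : Prop := ∃ c, GreenL a c ∧ GreenR c b

/-- The state of the dual Cayley automaton, started in state `s`,
after reading the first `n` symbols of the sequence `a`. -/
def stateAt {S : Type*} [Semigroup S] (s : S) (a : ℕ → S) : ℕ → S
  | 0 => s
  | n + 1 => stateAt s a n * a n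

/-- The transformation of `S^∞` induced by the state `s` of the dual
Cayley automaton: in state `t`, reading symbol `x`, output `x*t` and move to `t*x`. -/
def dualAct {S : Type*} [Semigroup S] (s : S) : (ℕ → S) → (ℕ → S) :=
  fun a n => a n * stateAt s a n

/-- The dual Cayley automaton semigroup `C*(S)`, as the subsemigroup of
transformations of `S^∞` generated by the states. -/
def dualCayley (S : Type*) [Semigroup S] : Subsemigroup (Function.End (ℕ → S)) :=
  Subsemigroup.closure (Set.range (dualAct (S := S)))

/-- Apply the states of a list in order (leftmost first) to a sequence:
the action of the product of states `ā₁ ⋯ ā_k`. -/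
def applyList {S : Type*} [Semigroup S] (l : List S) (a : ℕ → S) : ℕ → S :=
  l.foldl (fun b s => dualAct s b) a

/-- Prepend a symbol to an infinite sequence. -/
def consSeq {S : Type*} (x : S) (a : ℕ → S) : ℕ → S :=
  fun n => match n with
  | 0 => x
  | n + 1 => a n

/-- The list of sections: `secList [a₁,…,a_k] x = [a₁x, a₂(xa₁), a₃(xa₁a₂), …]`,
the state to which `ā₁ ⋯ ā_k` moves after reading `x`. -/
def secList {S : Type*} [Semigroup S] : List S → S → List S
  | [], _ => []
  | a :: l, x => (a * x) :: secList l (x * a)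

/-!
In a finite monoid, `x = u * x * z` forces `x = uⁿ * x * zⁿ` for every `n`, and some power of `z`
eventually repeats, so `x * zᵖ = x` (and likewise `uᵖ * x = x`) for some `p > 0`. This gives
stability: if `x` lies in the two-sided ideal generated by `x * y` then `x` and `x * y` are
`R`-related, and dually for `L`. Applied in `S¹` with `x = a`, `y = b`, and with `x = b`,
`y = a`, this yields `a R ab` and `b L ab`, since `a D ab` and `a D b` put `a` and `b` in the ideal
generated by `ab`.
-/

section FiniteMonoid

variable {M : Type*} [Monoid M]

lemma pow_mul_mul_pow_eq_self {x u z : M} (h : x = u * x * z) (n : ℕ) :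
    x = u ^ n * x * z ^ n := by
  induction n with
  | zero => simp
  | succ n ih =>
    calc x = u * x * z := h
      _ = u * (u ^ n * x * z ^ n) * z := by rw [← ih]
      _ = u ^ (n + 1) * x * z ^ (n + 1) := by rw [pow_succ' u, pow_succ z]; simp only [mul_assoc]

variable [Finite M]

lemma exists_pow_mul_pow_eq_pow (z : M) : ∃ i p, 0 < p ∧ z ^ i * z ^ p = z ^ i := by
  obtain ⟨i, j, hij, hz⟩ :=
    Set.finite_univ.exists_lt_map_eq_of_forall_mem (f := fun n : ℕ ↦ z ^ n) fun _ ↦ Set.mem_univ _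
  refine ⟨i, j - i, Nat.sub_pos_of_lt hij, ?_⟩
  rw [← pow_add, Nat.add_sub_cancel' hij.le]
  exact hz.symm

lemma exists_mul_pow_eq_self {x u z : M} (h : x = u * x * z) : ∃ p, 0 < p ∧ x * z ^ p = x := by
  obtain ⟨i, p, hp, hz⟩ := exists_pow_mul_pow_eq_pow z
  have hx := pow_mul_mul_pow_eq_self h i
  refine ⟨p, hp, ?_⟩
  calc x * z ^ p = u ^ i * x * z ^ i * z ^ p := by rw [← hx]
    _ = u ^ i * x * (z ^ i * z ^ p) := mul_assoc _ _ _
    _ = x := by rw [hz, ← hx]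

lemma exists_pow_mul_eq_self {x u z : M} (h : x = u * x * z) : ∃ p, 0 < p ∧ u ^ p * x = x := by
  obtain ⟨i, p, hp, hu⟩ := exists_pow_mul_pow_eq_pow u
  have hx := pow_mul_mul_pow_eq_self h i
  refine ⟨p, hp, ?_⟩
  calc u ^ p * x = u ^ p * (u ^ i * x * z ^ i) := by rw [← hx]
    _ = (u ^ p * u ^ i) * x * z ^ i := by simp only [mul_assoc]
    _ = x := by rw [pow_mul_comm, hu, ← hx]

lemma exists_mul_mul_eq_self_of_eq_mul_mul_mul {x y u v : M} (h : x = u * (x * y) * v) :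
    ∃ w, x * y * w = x := by
  obtain ⟨p, hp, hx⟩ := exists_mul_pow_eq_self (x := x) (u := u) (z := y * v)
    (by simpa only [mul_assoc] using h)
  obtain ⟨m, rfl⟩ := Nat.exists_eq_add_of_lt hp
  refine ⟨v * (y * v) ^ m, ?_⟩
  simpa only [zero_add, pow_succ', mul_assoc] using hx

lemma exists_mul_mul_eq_self_of_eq_mul_mul_mul_left {x y u v : M} (h : x = u * (y * x) * v) :
    ∃ w, w * (y * x) = x := by
  obtain ⟨p, hp, hx⟩ := exists_pow_mul_eq_self (x := x) (u := u * y) (z := v)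
    (by simpa only [mul_assoc] using h)
  obtain ⟨m, rfl⟩ := Nat.exists_eq_add_of_lt hp
  refine ⟨(u * y) ^ m * u, ?_⟩
  simpa only [zero_add, pow_succ, mul_assoc] using hx

end FiniteMonoid

section Semigroup

variable {S : Type*} [Semigroup S] {a b c : S}

lemma WithOne.exists_coe_mul_eq_coe_iff :
    (∃ x : WithOne S, a * x = c) ↔ a = c ∨ ∃ u, a * u = c := by
  constructor
  · rintro ⟨_ | u, h⟩
    · exact .inl (WithOne.coe_inj.mp h)
    · exact .inr ⟨u, WithOne.coe_inj.mp h⟩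
  · rintro (rfl | ⟨u, rfl⟩)
    · exact ⟨1, mul_one _⟩
    · exact ⟨u, rfl⟩

lemma WithOne.exists_mul_coe_eq_coe_iff :
    (∃ x : WithOne S, x * a = c) ↔ a = c ∨ ∃ u, u * a = c := by
  constructor
  · rintro ⟨_ | u, h⟩
    · exact .inl (WithOne.coe_inj.mp h)
    · exact .inr ⟨u, WithOne.coe_inj.mp h⟩
  · rintro (rfl | ⟨u, rfl⟩)
    · exact ⟨1, one_mul _⟩
    · exact ⟨u, rfl⟩

lemma GreenD.exists_eq_mul_mul (h : GreenD a b) :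
    (∃ p q : WithOne S, (a : WithOne S) = p * b * q) ∧
      ∃ p q : WithOne S, (b : WithOne S) = p * a * q := by
  obtain ⟨d, ⟨had, hda⟩, ⟨hdb, hbd⟩⟩ := h
  obtain ⟨p, hp⟩ := WithOne.exists_mul_coe_eq_coe_iff.mpr hda
  obtain ⟨p', hp'⟩ := WithOne.exists_mul_coe_eq_coe_iff.mpr had
  obtain ⟨q, hq⟩ := WithOne.exists_coe_mul_eq_coe_iff.mpr hdb
  obtain ⟨q', hq'⟩ := WithOne.exists_coe_mul_eq_coe_iff.mpr hbd
  exact ⟨⟨p, q', by rw [← hp, ← hq', mul_assoc]⟩, ⟨p', q, by rw [← hq, ← hp']⟩⟩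

end Semigroup

/-- If `a`, `b` and `ab` all belong to the same `D`-class of a finite semigroup,
then `ab ∈ R_a ∩ L_b`. -/
theorem stmt0 {S : Type*} [Semigroup S] [Fintype S] (a b : S)
    (hab : GreenD a b) (hprod : GreenD a (a * b)) :
    GreenR a (a * b) ∧ GreenL b (a * b) := by
  have : Finite (WithOne S) := inferInstanceAs (Finite (Option S))
  obtain ⟨p, q, ha⟩ := hprod.exists_eq_mul_mul.1
  obtain ⟨x, y, hb⟩ := hab.exists_eq_mul_mul.2
  rw [WithOne.coe_mul] at ha
  have hb' : (b : WithOne S) = (x * p) * (a * b) * (q * y) :=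
    calc (b : WithOne S) = x * a * y := hb
      _ = x * (p * (a * b) * q) * y := by rw [← ha]
      _ = (x * p) * (a * b) * (q * y) := by simp only [mul_assoc]
  refine ⟨⟨.inr ⟨b, rfl⟩, ?_⟩, ⟨.inr ⟨a, rfl⟩, ?_⟩⟩
  · rw [← WithOne.exists_coe_mul_eq_coe_iff, WithOne.coe_mul]
    exact exists_mul_mul_eq_self_of_eq_mul_mul_mul ha
  · rw [← WithOne.exists_mul_coe_eq_coe_iff, WithOne.coe_mul]
    exact exists_mul_mul_eq_self_of_eq_mul_mul_mul_left hb'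
end

section
/- Let R = {q_1, ..., q_n} be a finite right zero semigroup with n > 1. Then the dual Cayley automaton semigroup C*(R) is a free semigroup of rank n. -/
open Stream'

section RightZero

variable {S : Type*} [Semigroup S]

theorem dualAct_eq_cons (hz : ∀ x y : S, x * y = y) (s : S) (a : Stream' S) :
    dualAct s a = s :: a := by
  funext n
  cases n <;> simp [dualAct, stateAt, Stream'.cons, hz]

theorem applyList_eq_reverse_append_stream (hz : ∀ x y : S, x * y = y) (l : List S)
    (a : Stream' S) : applyList l a = l.reverse ++ₛ a := by
  induction l generalizing a with
  | nil => rfl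
  | cons s l ih =>
    change applyList l (dualAct s a) = _
    rw [dualAct_eq_cons hz, ih, List.reverse_cons, append_append_stream]
    rfl

end RightZero

namespace Stream'

variable {α : Type*} [Nontrivial α] {u v : List α}

theorem length_le_of_forall_append_stream_eq (h : ∀ a : Stream' α, u ++ₛ a = v ++ₛ a) :
    u.length ≤ v.length := by
  by_contra! hvu
  have head_eq (a : Stream' α) : a.get 0 = u[v.length] := by
    rw [← get_append_length v a, ← h, get_append_left _ _ _ hvu]
  obtain ⟨x, y, hxy⟩ := exists_pair_ne α
  exact hxy ((head_eq (const x)).trans (head_eq (const y)).symm)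

theorem eq_of_forall_append_stream_eq (h : ∀ a : Stream' α, u ++ₛ a = v ++ₛ a) : u = v := by
  refine append_left_injective _ _ _ _ (h (const (Classical.arbitrary α))) (le_antisymm ?_ ?_)
  · exact length_le_of_forall_append_stream_eq h
  · exact length_le_of_forall_append_stream_eq fun a => (h a).symm

end Stream'

/-- For a finite right zero semigroup `R` with `|R| > 1`, the dual Cayley automaton
semigroup `C*(R)` is free of rank `|R|`: the map sending a nonempty word over `R`
to the corresponding product of states (transformations of `R^∞`) is injective. -/
theorem stmt5 {R : Type*} [Fintype R] [Semigroup R]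
    (hz : ∀ x y : R, x * y = y) (hcard : 1 < Fintype.card R) :
    ∀ l₁ l₂ : List R, l₁ ≠ [] → l₂ ≠ [] →
      applyList l₁ = applyList l₂ → l₁ = l₂ := by
  intro l₁ l₂ _ _ h
  have : Nontrivial R := Fintype.one_lt_card_iff_nontrivial.mp hcard
  have hrev : l₁.reverse = l₂.reverse := Stream'.eq_of_forall_append_stream_eq fun a => by
    rw [← applyList_eq_reverse_append_stream hz, ← applyList_eq_reverse_append_stream hz, h]
  exact List.reverse_injective hrev
end

section
/- Let S be a finite semigroup and s, t ∈ S. The states s̄ and t̄ of the dual Cayley automaton C*(S) induce the same transformation of S^∞ if and only if the right translation maps ρ_s and ρ_t coincide, where ρ_s(x) = xs. -/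
theorem mul_stateAt_eq_of_mul_eq {S : Type*} [Semigroup S] {s t : S}
    (h : ∀ x : S, x * s = x * t) (a : ℕ → S) : ∀ (n : ℕ) (x : S),
    x * stateAt s a n = x * stateAt t a n
  | 0, x => h x
  | n + 1, x => by
    simp only [stateAt, ← mul_assoc, mul_stateAt_eq_of_mul_eq h a n x]

theorem dualAct_const_zero {S : Type*} [Semigroup S] (s x : S) :
    dualAct s (fun _ => x) 0 = x * s :=
  rfl

theorem stmt7_general {S : Type*} [Semigroup S] (s t : S) :
    dualAct s = dualAct t ↔ (fun x : S => x * s) = (fun x : S => x * t) := by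
  constructor
  · intro h
    funext x
    rw [← dualAct_const_zero, ← dualAct_const_zero, h]
  · intro h
    funext a n
    exact mul_stateAt_eq_of_mul_eq (congrFun h) a n (a n)

/-- Two states of the dual Cayley automaton induce the same transformation of `S^∞`
iff the corresponding right translations coincide. -/
theorem stmt7 {S : Type*} [Semigroup S] [Fintype S] (s t : S) :
    dualAct s = dualAct t ↔ (fun x : S => x * s) = (fun x : S => x * t) :=
  stmt7_general s t
end

section
/- Let G be a non-trivial finite group. Then the dual Cayley automaton semigroup C*(G) is infinite. -/
/-!
Take `g ≠ 1`. Starting from the constant sequence `1`, the `k`-th power of the state `g` outputs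
`t ↦ g ^ (k + t).choose (t + 1)`, and the state `g` reading this sequence passes through the states
`g ^ (k + t).choose k`. Read in `ZMod (orderOf g)`, these exponents are the coefficients of
`(1 - X)⁻¹ ^ (k + 1)`, so two equal powers of the state `g` force
`(1 - X) ^ (j + 1) = (1 - X) ^ (k + 1)`, whence `j = k` by comparing degrees.
-/

open Function

theorem Polynomial.natDegree_one_sub_X_pow {R : Type*} [CommRing R] [Nontrivial R] (d : ℕ) :
    ((1 - X : Polynomial R) ^ d).natDegree = d := by
  have h : (1 - X : Polynomial R) = -(X - C 1) := by
    rw [C_1]; ring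
  rw [h, natDegree_pow', natDegree_neg, natDegree_X_sub_C, mul_one]
  rw [leadingCoeff_neg, leadingCoeff_X_sub_C]
  exact neg_one_pow_ne_zero d

namespace PowerSeries

variable {R : Type*} [CommRing R] [Nontrivial R]

theorem one_sub_X_pow_injective : Injective fun d : ℕ => (1 - X : R⟦X⟧) ^ d := by
  intro j k h
  have hpoly : (1 - Polynomial.X : Polynomial R) ^ j = (1 - Polynomial.X) ^ k :=
    Polynomial.coe_injective R (by push_cast; exact h)
  rw [← Polynomial.natDegree_one_sub_X_pow (R := R) j,
    ← Polynomial.natDegree_one_sub_X_pow (R := R) k, hpoly]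

theorem mk_add_choose_injective : Injective fun d : ℕ => (mk fun n => ((d + n).choose d : R)) := by
  intro j k h
  have hunits : invOneSubPow R (j + 1) = invOneSubPow R (k + 1) :=
    Units.ext (by simpa only [invOneSubPow_val_succ_eq_mk_add_choose] using h)
  have hinv := congrArg Units.inv hunits
  simp only [invOneSubPow_inv_eq_one_sub_pow] at hinv
  exact Nat.succ_injective (one_sub_X_pow_injective hinv)

end PowerSeries

section DualCayley

variable {M : Type*} [Monoid M]

theorem stateAt_pow_choose (g : M) (k t : ℕ) :
    stateAt g (fun s => g ^ (k + s).choose (s + 1)) t = g ^ (k + t).choose t := by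
  induction t with
  | zero => simp [stateAt]
  | succ t ih =>
    rw [stateAt, ih, ← pow_add, ← add_assoc, Nat.choose_succ_succ]

theorem dualAct_iterate_one (g : M) (k : ℕ) :
    (dualAct g)^[k] 1 = fun t => g ^ (k + t).choose (t + 1) := by
  induction k with
  | zero => funext t; simp
  | succ k ih =>
    funext t
    rw [iterate_succ_apply', ih, dualAct, stateAt_pow_choose, ← pow_add,
      show k + 1 + t = k + t + 1 by omega, Nat.choose_succ_succ, add_comm]

theorem dualAct_iterate_injective {G : Type*} [LeftCancelMonoid G] {g : G} (hg : g ≠ 1) :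
    Injective fun k : ℕ => (dualAct g)^[k] := by
  intro j k h
  have hstate (t : ℕ) : g ^ (j + t).choose j = g ^ (k + t).choose k := by
    have hiter := congrArg (fun f => stateAt g (f 1) t) h
    simp only [dualAct_iterate_one, stateAt_pow_choose] at hiter
    rwa [Nat.choose_symm_add, Nat.choose_symm_add]
  have : Nontrivial (ZMod (orderOf g)) := ZMod.nontrivial_iff.mpr (orderOf_eq_one_iff.not.mpr hg)
  refine PowerSeries.mk_add_choose_injective (R := ZMod (orderOf g)) ?_
  ext t
  simp only [PowerSeries.coeff_mk]
  rw [ZMod.natCast_eq_natCast_iff, ← pow_eq_pow_iff_modEq]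
  exact hstate t

theorem dualAct_iterate_succ_mem_dualCayley {S : Type*} [Semigroup S] (s : S) (k : ℕ) :
    ((dualAct s)^[k + 1] : Function.End (ℕ → S)) ∈ dualCayley S := by
  have hs : (dualAct s : Function.End (ℕ → S)) ∈ dualCayley S :=
    Subsemigroup.subset_closure (Set.mem_range_self s)
  induction k with
  | zero => exact hs
  | succ k ih =>
    exact (dualCayley S).mul_mem (x := (dualAct s)^[k + 1]) ih hs

end DualCayley

theorem stmt11_general {G : Type*} [Group G] [Nontrivial G] :
    (dualCayley G : Set (Function.End (ℕ → G))).Infinite := by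
  obtain ⟨g, hg⟩ := exists_ne (1 : G)
  refine Set.infinite_of_injective_forall_mem
    (f := fun k : ℕ => ((dualAct g)^[k + 1] : Function.End (ℕ → G))) ?_
    (dualAct_iterate_succ_mem_dualCayley g)
  intro j k h
  exact Nat.succ_injective (dualAct_iterate_injective hg h)

/-- For a non-trivial finite group `G`, the dual Cayley automaton semigroup
`C*(G)` is infinite. -/
theorem stmt11 {G : Type*} [Group G] [Fintype G] [Nontrivial G] :
    (dualCayley G : Set (Function.End (ℕ → G))).Infinite :=
  stmt11_general
end

section
/- Let S be a finite semigroup whose dual Cayley automaton semigroup C*(S) is finite. Then S is H-trivial (every H-class of S is a singleton). -/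
/-! A non-trivial `H`-class of a finite semigroup `S` yields a non-trivial cyclic group
`ℤ/d ⊆ S`: if `a p = b`, `b q = a` and `a ≠ b`, no power of `p` is fixed by right multiplication
by `p`, so the cyclic semigroup generated by `p` has period `d ≥ 2`. Starting in the identity of
this group and reading symbols from it, the dual Cayley automaton outputs prefix sums, i.e. it
multiplies the power series of the input by `1 / (1 - X)`. Since `1 - X` has infinite order in
`(ℤ/d)⟦X⟧`, the powers of this state are pairwise distinct elements of `C*(S)`. -/

open Function Set Finset PowerSeries Multiplicative

theorem Function.exists_iterate_mem_periodicPts {α : Type*} [Finite α] (f : α → α) (x : α) :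
    ∃ m, f^[m] x ∈ periodicPts f := by
  obtain ⟨i, j, hij, h⟩ := Finite.exists_ne_map_eq_of_infinite fun n => f^[n] x
  wlog hlt : i < j generalizing i j
  · exact this j i hij.symm h.symm (hij.lt_or_gt.resolve_left hlt)
  refine ⟨i, mk_mem_periodicPts (Nat.sub_pos_of_lt hlt) ?_⟩
  rw [IsPeriodicPt, IsFixedPt, ← iterate_add_apply, Nat.sub_add_cancel hlt.le, h]

namespace PowerSeries

variable {R : Type*} [CommRing R]

theorem coeff_mul_mk_one (f : R⟦X⟧) (n : ℕ) :
    coeff n (f * mk 1) = ∑ i ∈ range (n + 1), coeff i f := by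
  rw [coeff_mul, Finset.Nat.sum_antidiagonal_eq_sum_range_succ
    fun i j => coeff i f * coeff j (mk 1)]
  simp

theorem coeff_self_one_sub_X_pow (n : ℕ) : coeff n ((1 - X : R⟦X⟧) ^ n) = (-1) ^ n := by
  have h : (1 - X : R⟦X⟧) =
      ((Polynomial.C (-1) * (Polynomial.X + Polynomial.C (-1)) : Polynomial R) : R⟦X⟧) := by
    simp; ring
  rw [h, ← Polynomial.coe_pow, Polynomial.coeff_coe, mul_pow, ← map_pow, Polynomial.coeff_C_mul,
    Polynomial.coeff_X_add_C_pow]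
  simp

theorem not_isOfFinOrder_one_sub_X [Nontrivial R] : ¬IsOfFinOrder (1 - X : R⟦X⟧) := by
  rw [isOfFinOrder_iff_pow_eq_one]
  rintro ⟨n, hn, h⟩
  have h' := congrArg (coeff n) h
  rw [coeff_self_one_sub_X_pow, coeff_one, if_neg hn.ne'] at h'
  exact (isUnit_neg_one.pow n).ne_zero h'

theorem mk_one_pow_injective [Nontrivial R] : Injective fun k : ℕ => (mk 1 : R⟦X⟧) ^ k := by
  let u : R⟦X⟧ˣ :=
    ⟨mk 1, 1 - X, mk_one_mul_one_sub_eq_one R, by rw [mul_comm, mk_one_mul_one_sub_eq_one]⟩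
  have hu : ¬IsOfFinOrder u := by
    rw [← isOfFinOrder_inv_iff, ← Units.isOfFinOrder_val]
    exact not_isOfFinOrder_one_sub_X
  intro i j h
  exact injective_pow_iff_not_isOfFinOrder.2 hu (Units.ext (by simpa [u] using h))

end PowerSeries

section Semigroup

variable {S : Type*} [Semigroup S]

/-- `powSucc p n = p ^ (n + 1)`; a semigroup has no `p ^ 0`. -/
def powSucc (p : S) (n : ℕ) : S := (· * p)^[n] p

theorem mul_powSucc (y p : S) (n : ℕ) : y * powSucc p n = (· * p)^[n + 1] y := by
  induction n with
  | zero => rfl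
  | succ n ih =>
    rw [powSucc, iterate_succ_apply', ← powSucc, ← mul_assoc, ih, iterate_succ_apply' _ (n + 1)]

theorem powSucc_mul_powSucc (p : S) (i j : ℕ) :
    powSucc p i * powSucc p j = powSucc p (i + j + 1) := by
  rw [mul_powSucc, powSucc, ← iterate_add_apply, powSucc, Nat.add_right_comm, add_comm i]

theorem iterate_powSucc (p : S) (m i : ℕ) : (· * p)^[i] (powSucc p m) = powSucc p (m + i) := by
  rw [powSucc, powSucc, ← iterate_add_apply, add_comm]

theorem exists_not_isFixedPt_powSucc_of_greenH {a b : S} (hH : GreenH a b) (hab : a ≠ b) :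
    ∃ p : S, ∀ n, ¬IsFixedPt (· * p) (powSucc p n) := by
  obtain ⟨⟨hR, hR'⟩, hL, -⟩ := hH
  obtain ⟨p, hp⟩ := hR.resolve_left hab
  obtain ⟨q, hq⟩ := hR'.resolve_left hab.symm
  obtain ⟨r, hr⟩ := hL.resolve_left hab
  refine ⟨p, fun n hfix => hab ?_⟩
  -- On `S¹a`, right multiplication by `q` undoes right multiplication by `p`.
  set T : Set S := insert a (range (· * a))
  have hmaps : MapsTo (· * p) T T := by
    rintro _ (rfl | ⟨u, rfl⟩)
    · exact Or.inr ⟨r, hr.trans hp.symm⟩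
    · exact Or.inr ⟨u * r, by simp only [mul_assoc, hr, hp]⟩
  have hinv : ∀ y ∈ T, y * p * q = y := by
    rintro _ (rfl | ⟨u, rfl⟩)
    · rw [hp, hq]
    · simp only [mul_assoc, hp, hq]
  have hinj : InjOn (· * p) T := fun y hy z hz h => by
    rw [← hinv y hy, ← hinv z hz]
    exact congrArg (· * q) h
  refine hinj.iterate hmaps (n + 1) (mem_insert a _) (Or.inr ⟨r, hr⟩) ?_
  have hcomm : p * powSucc p n = powSucc p n :=
    (mul_powSucc p p n).trans ((iterate_succ_apply' _ n p).trans hfix)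
  rw [← mul_powSucc, ← mul_powSucc, ← hp, mul_assoc, hcomm]

theorem exists_injective_mulHom_zmod [Finite S] {p : S}
    (hp : ∀ n, ¬IsFixedPt (· * p) (powSucc p n)) :
    ∃ d, 1 < d ∧ ∃ φ : Multiplicative (ZMod d) →ₙ* S, Injective φ := by
  obtain ⟨m₀, hm₀⟩ := exists_iterate_mem_periodicPts (· * p) p
  obtain ⟨d, hd⟩ : ∃ d, minimalPeriod (· * p) (powSucc p m₀) = d := ⟨_, rfl⟩
  have hd0 : 0 < d := hd ▸ minimalPeriod_pos_of_mem_periodicPts hm₀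
  -- With `d ∣ m + 1`, `p ^ (m + 1)` is the identity of the group `{p ^ (m + 1 + i) | i < d}`.
  obtain ⟨m, hm, k, hk⟩ : ∃ m, m₀ ≤ m ∧ d ∣ m + 1 := by
    have : m₀ + 1 ≤ d * (m₀ + 1) := Nat.le_mul_of_pos_left _ hd0
    exact ⟨d * (m₀ + 1) - 1, by omega, m₀ + 1, by omega⟩
  have hmin : minimalPeriod (· * p) (powSucc p m) = d := by
    rw [← hd, ← Nat.add_sub_cancel' hm, ← iterate_powSucc]
    exact minimalPeriod_apply_iterate hm₀ _
  have hd1 : 1 < d := by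
    refine lt_of_le_of_ne hd0 fun h1 => hp m ?_
    rw [← minimalPeriod_eq_one_iff_isFixedPt, hmin, h1]
  have hmod : ∀ n, powSucc p (m + n % d) = powSucc p (m + n) := fun n => by
    rw [← iterate_powSucc, ← iterate_powSucc, ← hmin, iterate_mod_minimalPeriod_eq]
  have : NeZero d := ⟨hd0.ne'⟩
  refine ⟨d, hd1, ⟨fun c => powSucc p (m + c.toAdd.val), fun a b => ?_⟩, fun a b h => ?_⟩
  · rw [powSucc_mul_powSucc, toAdd_mul, ZMod.val_add, hmod,
      show m + a.toAdd.val + (m + b.toAdd.val) + 1 = m + (a.toAdd.val + b.toAdd.val + (m + 1)) by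
        omega, ← hmod (_ + (m + 1)), hk, Nat.add_mul_mod_self_left, hmod]
  · have h' : (· * p)^[a.toAdd.val] (powSucc p m) = (· * p)^[b.toAdd.val] (powSucc p m) := by
      rwa [iterate_powSucc, iterate_powSucc]
    have hlt : ∀ c : ZMod d, c.val ∈ Set.Iio (minimalPeriod (· * p) (powSucc p m)) :=
      fun c => hmin ▸ c.val_lt
    exact toAdd.injective <| ZMod.val_injective d <|
      iterate_injOn_Iio_minimalPeriod (hlt _) (hlt _) h'

theorem stateAt_map_ofAdd {A : Type*} [AddCommMonoid A] (φ : Multiplicative A →ₙ* S)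
    (c : ℕ → A) (n : ℕ) :
    stateAt (φ (ofAdd 0)) (fun i => φ (ofAdd (c i))) n = φ (ofAdd (∑ i ∈ range n, c i)) := by
  induction n with
  | zero => rfl
  | succ n ih => rw [stateAt, ih, ← map_mul, ← ofAdd_add, sum_range_succ]

theorem dualAct_map_ofAdd {A : Type*} [AddCommMonoid A] (φ : Multiplicative A →ₙ* S)
    (c : ℕ → A) :
    dualAct (φ (ofAdd 0)) (fun i => φ (ofAdd (c i))) =
      fun n => φ (ofAdd (∑ i ∈ range (n + 1), c i)) := by
  funext n
  rw [dualAct, stateAt_map_ofAdd, ← map_mul, ← ofAdd_add, sum_range_succ, add_comm]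

theorem iterate_dualAct_mem_dualCayley (s : S) (k : ℕ) : (dualAct s)^[k + 1] ∈ dualCayley S := by
  induction k with
  | zero => exact Subsemigroup.subset_closure (mem_range_self s)
  | succ k ih =>
    rw [iterate_succ']
    exact (dualCayley S).mul_mem (x := dualAct s)
      (Subsemigroup.subset_closure (mem_range_self s)) ih

theorem dualCayley_infinite {R : Type*} [CommRing R] [Nontrivial R]
    (φ : Multiplicative R →ₙ* S) (hφ : Injective φ) :
    (dualCayley S : Set (Function.End (ℕ → S))).Infinite := by
  let seq : R⟦X⟧ → ℕ → S := fun f n => φ (ofAdd (coeff n f))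
  have hseq : Injective seq := fun f g h =>
    ext fun n => ofAdd.injective (hφ (congrFun h n))
  -- In the identity state, the automaton outputs prefix sums: multiplication by `1 / (1 - X)`.
  have hstep : ∀ f, dualAct (φ (ofAdd 0)) (seq f) = seq (f * PowerSeries.mk 1) := fun f => by
    simp only [seq, dualAct_map_ofAdd, coeff_mul_mk_one]
  have hiter : ∀ k, (dualAct (φ (ofAdd 0)))^[k] (seq 1) = seq (PowerSeries.mk 1 ^ k) := by
    intro k
    induction k with
    | zero => rfl
    | succ k ih => rw [iterate_succ_apply', ih, hstep, pow_succ]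
  refine Set.infinite_of_injective_forall_mem (f := fun k => (dualAct (φ (ofAdd 0)))^[k + 1])
    (fun i j hij => ?_) (iterate_dualAct_mem_dualCayley _)
  have h := congrFun hij (seq 1)
  dsimp only at h
  rw [hiter, hiter] at h
  exact Nat.succ_injective (mk_one_pow_injective (hseq h))

end Semigroup

/-- If `C*(S)` is finite then `S` is `H`-trivial. -/
theorem stmt12 {S : Type*} [Semigroup S] [Fintype S]
    (h : (dualCayley S : Set (Function.End (ℕ → S))).Finite) :
    ∀ a b : S, GreenH a b → a = b := by
  intro a b hH
  by_contra hab
  obtain ⟨p, hp⟩ := exists_not_isFixedPt_powSucc_of_greenH hH hab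
  obtain ⟨d, hd, φ, hφ⟩ := exists_injective_mulHom_zmod hp
  have : Fact (1 < d) := ⟨hd⟩
  exact dualCayley_infinite φ hφ h
end

section
/- Let S be a finite semigroup whose dual Cayley automaton semigroup C*(S) is finite. Then S contains no non-trivial right zero subsemigroup. -/
/-!
If `T` is a right zero subsemigroup and `e ∈ T`, then on sequences over `T` every state the
automaton passes through lies in `T`, so the state `e` just prepends `e` to its input. For
`f ∈ T` with `f ≠ e`, the `k`-th power of `e` therefore sends the constant sequence `f` to
`e^k f^ω`; these are pairwise distinct, so `e` has infinite order in `C*(S)`.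
-/

lemma Subsemigroup.pow_succ_mem {M : Type*} [Monoid M] (N : Subsemigroup M) {x : M}
    (hx : x ∈ N) (n : ℕ) : x ^ (n + 1) ∈ N := by
  induction n with
  | zero => simpa using hx
  | succ k ih => rw [pow_succ]; exact N.mul_mem ih hx

section RightZero

variable {S : Type*} [Semigroup S] {T : Set S}

lemma stateAt_mem_of_rightZero (hT : ∀ x ∈ T, ∀ y ∈ T, x * y = y) {e : S} (he : e ∈ T)
    {a : ℕ → S} (ha : ∀ n, a n ∈ T) (n : ℕ) : stateAt e a n ∈ T := by
  induction n with
  | zero => exact he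
  | succ k ih =>
    show stateAt e a k * a k ∈ T
    rw [hT _ ih _ (ha k)]
    exact ha k

lemma dualAct_eq_consSeq_of_rightZero (hT : ∀ x ∈ T, ∀ y ∈ T, x * y = y) {e : S}
    (he : e ∈ T) {a : ℕ → S} (ha : ∀ n, a n ∈ T) : dualAct e a = consSeq e a := by
  funext n
  cases n with
  | zero => exact hT _ (ha 0) _ he
  | succ k =>
    show a (k + 1) * (stateAt e a k * a k) = a k
    rw [hT _ (stateAt_mem_of_rightZero hT he ha k) _ (ha k), hT _ (ha (k + 1)) _ (ha k)]

lemma dualAct_iterate_const_of_rightZero (hT : ∀ x ∈ T, ∀ y ∈ T, x * y = y) {e f : S}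
    (he : e ∈ T) (hf : f ∈ T) (k : ℕ) :
    (dualAct e)^[k] (fun _ => f) = fun n => if n < k then e else f := by
  induction k with
  | zero => simp only [Function.iterate_zero, id, Nat.not_lt_zero, if_false]
  | succ k ih =>
    have hmem : ∀ n, (if n < k then e else f) ∈ T := fun n => by split_ifs <;> assumption
    rw [Function.iterate_succ_apply', ih, dualAct_eq_consSeq_of_rightZero hT he hmem]
    funext n
    cases n <;> simp [consSeq]

end RightZero

lemma injective_ite_lt {α : Type*} {e f : α} (hef : e ≠ f) :
    Function.Injective fun k : ℕ => fun n : ℕ => if n < k then e else f := by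
  intro a b hab
  by_contra hne
  rcases Nat.lt_or_gt_of_ne hne with hlt | hlt
  · exact hef (by simpa [hlt] using (congrFun hab a).symm)
  · exact hef (by simpa [hlt] using congrFun hab b)

theorem stmt13_general {S : Type*} [Semigroup S]
    (h : (dualCayley S : Set (Function.End (ℕ → S))).Finite) :
    ¬ ∃ T : Set S, (∀ x ∈ T, ∀ y ∈ T, x * y = y) ∧ ∃ x ∈ T, ∃ y ∈ T, x ≠ y := by
  rintro ⟨T, hT, e, he, f, hf, hef⟩
  set D : Function.End (ℕ → S) := dualAct e
  have hpow_mem (k : ℕ) : D ^ (k + 1) ∈ dualCayley S :=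
    (dualCayley S).pow_succ_mem (Subsemigroup.subset_closure (Set.mem_range_self e)) k
  have hpow_apply (k : ℕ) : (D ^ k) (fun _ => f) = fun n => if n < k then e else f := by
    rw [← dualAct_iterate_const_of_rightZero hT he hf k]
    exact congrFun (hom_coe_pow (fun g : Function.End (ℕ → S) => g) rfl (fun _ _ => rfl) D k) _
  have hpow_inj : Function.Injective fun k : ℕ => D ^ (k + 1) := by
    intro a b hab
    have := congrArg (fun g : Function.End (ℕ → S) => g (fun _ => f)) hab
    simp only [hpow_apply] at this
    exact Nat.succ_injective (injective_ite_lt hef this)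
  exact Set.infinite_of_injective_forall_mem hpow_inj hpow_mem h

/-- If `C*(S)` is finite then `S` contains no non-trivial right zero subsemigroup. -/
theorem stmt13 {S : Type*} [Semigroup S] [Fintype S]
    (h : (dualCayley S : Set (Function.End (ℕ → S))).Finite) :
    ¬ ∃ T : Set S, (∀ x ∈ T, ∀ y ∈ T, x * y = y) ∧ ∃ x ∈ T, ∃ y ∈ T, x ≠ y :=
  stmt13_general h
end
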